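/- arXiv:2512.19998 — 2 statements merged into one kernel-verified Lean document; each statement's English description precedes it below -/
import Mathlib

section
/- Let n ≥ 1 and let p_1, …, p_n be positive integers all of the same parity (p_a ≡ p_b (mod 2) for all a, b). Set N = Σ_{a=1}^n p_a and k = ⌊N/2⌋, and for 1 ≤ b ≤ n−1 set 𝐯_{n−b} = Σ_{a=1}^b p_a and 𝔳_i = ⌊𝐯_i/2⌋. Then Σ_{a=1}^{n−1} (n−a)·p_a + Σ_{a=1}^n ⌊p_a/2⌋ = 2·Σ_{i=1}^{n−1} 𝔳_i + k. -/
open Finset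

private lemma refl_sum (f : ℕ → ℕ) (n : ℕ) :
    ∑ i ∈ Icc 1 n, f (n + 1 - i) = ∑ b ∈ Icc 1 n, f b := by
  refine Finset.sum_nbij' (fun i => n + 1 - i) (fun b => n + 1 - b) ?_ ?_ ?_ ?_ ?_ <;>
      intro a ha <;> simp only [mem_Icc] at ha ⊢ <;>
    first
      | omega
      | (congr 1; omega)

private lemma coef_sum (p : ℕ → ℕ) : ∀ n : ℕ,
    ∑ a ∈ Icc 1 n, (n + 1 - a) * p a = ∑ b ∈ Icc 1 n, ∑ a ∈ Icc 1 b, p a := by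
  intro n
  induction n with
  | zero => simp
  | succ m ih =>
    rw [Finset.sum_Icc_succ_top (by omega : 1 ≤ m + 1),
        Finset.sum_Icc_succ_top (by omega : 1 ≤ m + 1)]
    have h : ∑ a ∈ Icc 1 m, (m + 1 + 1 - a) * p a
        = ∑ a ∈ Icc 1 m, ((m + 1 - a) * p a + p a) := by
      apply Finset.sum_congr rfl
      intro a ha
      simp only [mem_Icc] at ha
      have : m + 1 + 1 - a = (m + 1 - a) + 1 := by omega
      rw [this]; ring
    rw [h, Finset.sum_add_distrib, ih,
        show m + 1 + 1 - (m + 1) = 1 by omega, one_mul,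
        Finset.sum_Icc_succ_top (by omega : 1 ≤ m + 1) p]
    omega

private lemma parity_sum (p : ℕ → ℕ) (e : ℕ) (hp : ∀ a, p a % 2 = e) (m : ℕ) :
    (∑ a ∈ Icc 1 m, p a) % 2 = (m * e) % 2 := by
  induction m with
  | zero => simp
  | succ k ih =>
    rw [Finset.sum_Icc_succ_top (by omega : 1 ≤ k + 1)]
    have he : e ≤ 1 := by have := hp 0; omega
    have hq := hp (k + 1)
    rcases (by omega : e = 0 ∨ e = 1) with rfl | rfl <;>
      simp only [mul_zero, mul_one] at ih ⊢ <;> omega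

private lemma main_ind (p : ℕ → ℕ) (e : ℕ) (hp : ∀ a, p a % 2 = e) : ∀ n : ℕ,
    (∑ b ∈ Icc 1 n, ∑ a ∈ Icc 1 b, p a) + ∑ a ∈ Icc 1 (n + 1), p a / 2
      = 2 * ∑ b ∈ Icc 1 n, (∑ a ∈ Icc 1 b, p a) / 2 + (∑ a ∈ Icc 1 (n + 1), p a) / 2 := by
  intro n
  induction n with
  | zero => simp
  | succ m ih =>
    have g1 : ∑ b ∈ Icc 1 (m + 1), ∑ a ∈ Icc 1 b, p a
        = (∑ b ∈ Icc 1 m, ∑ a ∈ Icc 1 b, p a) + ∑ a ∈ Icc 1 (m + 1), p a :=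
      Finset.sum_Icc_succ_top (by omega) _
    have g2 : ∑ a ∈ Icc 1 (m + 1 + 1), p a / 2
        = (∑ a ∈ Icc 1 (m + 1), p a / 2) + p (m + 1 + 1) / 2 :=
      Finset.sum_Icc_succ_top (by omega) _
    have g3 : ∑ b ∈ Icc 1 (m + 1), (∑ a ∈ Icc 1 b, p a) / 2
        = (∑ b ∈ Icc 1 m, (∑ a ∈ Icc 1 b, p a) / 2) + (∑ a ∈ Icc 1 (m + 1), p a) / 2 :=
      Finset.sum_Icc_succ_top (by omega) _
    have g4 : ∑ a ∈ Icc 1 (m + 1 + 1), p a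
        = (∑ a ∈ Icc 1 (m + 1), p a) + p (m + 1 + 1) :=
      Finset.sum_Icc_succ_top (by omega) _
    have hS := parity_sum p e hp (m + 1)
    have hq := hp (m + 1 + 1)
    have he : e ≤ 1 := by have := hp 0; omega
    have hodd : (∑ a ∈ Icc 1 (m + 1), p a) % 2 = 1 → p (m + 1 + 1) % 2 = 1 := by
      rcases (by omega : e = 0 ∨ e = 1) with rfl | rfl
      · simp only [mul_zero] at hS; omega
      · omega
    rw [g1, g2, g3, g4]
    omega

private lemma key (p : ℕ → ℕ) (e : ℕ) (hp : ∀ a, p a % 2 = e) (n : ℕ) :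
    (∑ a ∈ Icc 1 n, (n + 1 - a) * p a) + ∑ a ∈ Icc 1 (n + 1), p a / 2
      = 2 * ∑ i ∈ Icc 1 n, (∑ a ∈ Icc 1 (n + 1 - i), p a) / 2
        + (∑ a ∈ Icc 1 (n + 1), p a) / 2 := by
  rw [coef_sum, refl_sum (fun b => (∑ a ∈ Icc 1 b, p a) / 2) n]
  exact main_ind p e hp n

/-- Lemma 5.2 (arithmetic content): for positive integers `p 1, …, p n` all of the same
parity, with `N = ∑ p a`, `k = ⌊N/2⌋`, `𝐯 i = ∑_{a=1}^{n-i} p a` and `𝔳 i = ⌊𝐯 i / 2⌋`,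
one has `∑_{a=1}^{n-1} (n-a) p a + ∑_{a=1}^{n} ⌊p a / 2⌋ = 2 ∑_{i=1}^{n-1} 𝔳 i + k`. -/
theorem stmt_0 (n : ℕ) (hn : 1 ≤ n) (p : ℕ → ℕ)
    (hp : ∀ a ∈ Finset.Icc 1 n, 0 < p a)
    (hpar : ∀ a ∈ Finset.Icc 1 n, ∀ b ∈ Finset.Icc 1 n, p a % 2 = p b % 2) :
    (∑ a ∈ Finset.Icc 1 (n - 1), (n - a) * p a) + (∑ a ∈ Finset.Icc 1 n, p a / 2)
      = 2 * (∑ i ∈ Finset.Icc 1 (n - 1), (∑ a ∈ Finset.Icc 1 (n - i), p a) / 2)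
        + (∑ a ∈ Finset.Icc 1 n, p a) / 2 := by
  obtain ⟨m, rfl⟩ : ∃ m, n = m + 1 := ⟨n - 1, by omega⟩
  set p' : ℕ → ℕ := fun a => if 1 ≤ a ∧ a ≤ m + 1 then p a else p 1 with hp'def
  have hp' : ∀ a, p' a % 2 = p 1 % 2 := by
    intro a
    simp only [hp'def]
    split
    · exact hpar a (by simp only [mem_Icc]; omega) 1 (by simp only [mem_Icc]; omega)
    · rfl
  have hagree : ∀ a ∈ Icc 1 (m + 1), p a = p' a := by
    intro a ha
    simp only [mem_Icc] at ha
    simp [hp'def, ha]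
  have hsub : ∀ b, b ≤ m + 1 → ∑ a ∈ Icc 1 b, p a = ∑ a ∈ Icc 1 b, p' a := by
    intro b hb
    apply Finset.sum_congr rfl
    intro a ha
    simp only [mem_Icc] at ha
    exact hagree a (by simp only [mem_Icc]; omega)
  have e1 : ∑ a ∈ Icc 1 (m + 1 - 1), (m + 1 - a) * p a
      = ∑ a ∈ Icc 1 m, (m + 1 - a) * p' a := by
    simp only [Nat.add_sub_cancel]
    apply Finset.sum_congr rfl
    intro a ha
    simp only [mem_Icc] at ha
    rw [hagree a (by simp only [mem_Icc]; omega)]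
  have e2 : ∑ a ∈ Icc 1 (m + 1), p a / 2 = ∑ a ∈ Icc 1 (m + 1), p' a / 2 := by
    apply Finset.sum_congr rfl
    intro a ha
    rw [hagree a ha]
  have e3 : ∑ i ∈ Icc 1 (m + 1 - 1), (∑ a ∈ Icc 1 (m + 1 - i), p a) / 2
      = ∑ i ∈ Icc 1 m, (∑ a ∈ Icc 1 (m + 1 - i), p' a) / 2 := by
    simp only [Nat.add_sub_cancel]
    apply Finset.sum_congr rfl
    intro i hi
    simp only [mem_Icc] at hi
    rw [hsub (m + 1 - i) (by omega)]
  rw [e1, e2, e3, hsub (m + 1) le_rfl]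
  exact key p' (p 1 % 2) hp' m
end

section
/- Let n ≥ 2, θ ∈ ℤ, and v_1, …, v_{n−1} ∈ ℤ. For 1 ≤ j ≤ n−1 define q_j = (v_j − θ) + 2·Σ_{l=1}^{n−1−j} (−1)^l (v_{j+l} − θ), and for 0 ≤ m ≤ n define the function 𝔓_m(u) = ∏_{l=1}^{m−1} (1 − ((m−l)/(2u))²)^{q_{n−l}} (an empty product, equal to 1, for m ≤ 1), where the powers are integer powers in ℂ. Then for every 1 ≤ i ≤ n−1 and every u ∈ ℂ such that 2u ∉ ℤ, one has: (1 − 1/(4u²))^{θ − v_i} · 𝔓_{n−i−1}(u) · 𝔓_{n−i+1}(u) / ( 𝔓_{n−i}(u − 1/2) · 𝔓_{n−i}(u + 1/2) ) = 1. -/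
/-!
Write `B_w(k) = 1 - (k/2w)²`, so that `𝔓_m(w) = ∏_{k+l=m} B_w(k)^{q_{n-l}}`. Since
`B_w(k) = (2w-k)(2w+k)/(2w)²`, one has
`B_{u-½}(k+1) B_{u+½}(k+1) B_u(1)² = B_u(k) B_u(k+2)`, so `𝔓_m(u-½) 𝔓_m(u+½)` equals
`𝔓_{m-1}(u) 𝔓_{m+1}(u)` up to a power of `B_u(1) = 1 - 1/4u²`. Its exponent
`-(q_i + 2 ∑_{l<m} q_{n-l})` collapses to `θ - v_i`, because `q_j + q_{j+1} = v_j - v_{j+1}`.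
-/

/-- The integers `q_j` of (5.5):
`q j = (v j - θ) + 2 ∑_{l=1}^{n-1-j} (-1)^l (v (j+l) - θ)`. -/
noncomputable def qcoef (n : ℕ) (θ : ℤ) (v : ℕ → ℤ) (j : ℕ) : ℤ :=
  (v j - θ) + 2 * ∑ l ∈ Finset.Icc 1 (n - 1 - j), (-1 : ℤ) ^ l * (v (j + l) - θ)

/-- The correction factor (5.6): `𝔓_m(u) = ∏_{l=1}^{m-1} (1 - ((m-l)/(2u))²)^{q_{n-l}}`. -/
noncomputable def frakP (n : ℕ) (θ : ℤ) (v : ℕ → ℤ) (m : ℕ) (u : ℂ) : ℂ :=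
  ∏ l ∈ Finset.Icc 1 (m - 1), (1 - (((m - l : ℕ) : ℂ) / (2 * u)) ^ 2) ^ (qcoef n θ v (n - l))

open Finset

section qcoef

variable (n : ℕ) (θ : ℤ) (v : ℕ → ℤ)

theorem qcoef_add_qcoef_succ {j : ℕ} (hj : j + 2 ≤ n) :
    qcoef n θ v j + qcoef n θ v (j + 1) = v j - v (j + 1) := by
  generalize hs : n - 1 - (j + 1) = s
  have hs' : n - 1 - j = s + 1 := by omega
  have hsplit : ∑ l ∈ Icc 1 (s + 1), (-1 : ℤ) ^ l * (v (j + l) - θ)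
      = -(v (j + 1) - θ) - ∑ l ∈ Icc 1 s, (-1 : ℤ) ^ l * (v (j + 1 + l) - θ) := by
    simp only [← Ico_add_one_right_eq_Icc, sum_Ico_eq_sum_range, Nat.add_sub_cancel,
      sum_range_succ', sub_eq_add_neg _ (∑ _ ∈ _, _), ← sum_neg_distrib]
    rw [add_comm]
    congr 1
    · simp
    · refine sum_congr rfl fun x _ => ?_
      rw [show j + (1 + (x + 1)) = j + 1 + (1 + x) by omega]
      ring
  rw [qcoef, qcoef, hs', hs, hsplit]
  ring

theorem qcoef_add_two_mul_sum {k : ℕ} (hk : k + 1 < n) :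
    qcoef n θ v (n - (k + 1)) + 2 * ∑ l ∈ Icc 1 k, qcoef n θ v (n - l) =
      v (n - (k + 1)) - θ := by
  induction k with
  | zero => simp [qcoef]
  | succ k ih =>
    have hrec := qcoef_add_qcoef_succ n θ v (j := n - (k + 2)) (by omega)
    rw [show n - (k + 2) + 1 = n - (k + 1) by omega] at hrec
    have := ih (by omega)
    rw [sum_Icc_succ_top (by omega), show n - (k + 1 + 1) = n - (k + 2) by omega]
    linarith

end qcoef

theorem zpow_sum₀ {ι G : Type*} [CommGroupWithZero G] {a : G} (ha : a ≠ 0)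
    (s : Finset ι) (e : ι → ℤ) : a ^ (∑ i ∈ s, e i) = ∏ i ∈ s, a ^ e i := by
  classical
  induction s using Finset.induction_on with
  | empty => simp
  | insert i s hi ih => rw [sum_insert hi, prod_insert hi, zpow_add₀ ha, ih]

def zpowConv {K : Type*} [CommGroupWithZero K] (f : ℕ → K) (e : ℕ → ℤ) (m : ℕ) : K :=
  ∏ l ∈ Icc 1 (m - 1), f (m - l) ^ e l

section zpowConv

variable {K : Type*} [CommGroupWithZero K] (f : ℕ → K) (e : ℕ → ℤ)

theorem zpowConv_ne_zero (hf : ∀ k, f k ≠ 0) (m : ℕ) : zpowConv f e m ≠ 0 :=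
  prod_ne_zero_iff.mpr fun _ _ => zpow_ne_zero _ (hf _)

theorem zpowConv_eq_prod_Icc (hf : f 0 = 1) (m : ℕ) :
    zpowConv f e m = ∏ l ∈ Icc 1 m, f (m - l) ^ e l := by
  rcases m with _ | m
  · rfl
  · rw [prod_Icc_succ_top (by omega), Nat.sub_self, hf, one_zpow, mul_one]
    rfl

theorem zpowConv_succ_eq_prod_Icc (k : ℕ) :
    zpowConv f e (k + 1) = ∏ l ∈ Icc 1 k, f (k - l + 1) ^ e l :=
  prod_congr rfl fun l hl => by rw [show k + 1 - l = k - l + 1 by simp at hl; omega]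

theorem zpowConv_add_two_eq_prod_Icc_mul (k : ℕ) :
    zpowConv f e (k + 2) = (∏ l ∈ Icc 1 k, f (k - l + 2) ^ e l) * f 1 ^ e (k + 1) := by
  rw [zpowConv, show k + 2 - 1 = k + 1 from rfl, prod_Icc_succ_top (by omega),
    show k + 2 - (k + 1) = 1 by omega]
  congr 1
  exact prod_congr rfl fun l hl => by rw [show k + 2 - l = k - l + 2 by simp at hl; omega]

theorem zpowConv_mul_zpowConv_add_two (g h : ℕ → K) (hf0 : f 0 = 1) (hf1 : f 1 ≠ 0)
    (hfgh : ∀ k, g (k + 1) * h (k + 1) * f 1 ^ 2 = f k * f (k + 2)) (k : ℕ) :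
    zpowConv f e k * zpowConv f e (k + 2) =
      zpowConv g e (k + 1) * zpowConv h e (k + 1) *
        f 1 ^ (e (k + 1) + 2 * ∑ l ∈ Icc 1 k, e l) := by
  rw [zpowConv_eq_prod_Icc f e hf0, zpowConv_add_two_eq_prod_Icc_mul, zpowConv_succ_eq_prod_Icc,
    zpowConv_succ_eq_prod_Icc]
  calc _ = (∏ l ∈ Icc 1 k, (f (k - l) * f (k - l + 2)) ^ e l) * f 1 ^ e (k + 1) := by
        simp only [mul_zpow, prod_mul_distrib]; ac_rfl
    _ = (∏ l ∈ Icc 1 k, (g (k - l + 1) * h (k - l + 1) * f 1 ^ 2) ^ e l) *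
          f 1 ^ e (k + 1) := by
        simp only [hfgh]
    _ = _ := by
        rw [zpow_add₀ hf1, zpow_mul, zpow_sum₀ (zpow_ne_zero _ hf1)]
        simp only [mul_zpow, prod_mul_distrib, zpow_ofNat]
        ac_rfl

end zpowConv

theorem one_sub_div_sq_ne_zero {K : Type*} [Field K] {x k : K} (h₁ : x ≠ k) (h₂ : x ≠ -k) :
    1 - (k / x) ^ 2 ≠ 0 := by
  rcases eq_or_ne x 0 with rfl | hx
  · simp
  · rw [show 1 - (k / x) ^ 2 = (x - k) * (x + k) / x ^ 2 by field_simp; ring]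
    exact div_ne_zero (mul_ne_zero (sub_ne_zero.mpr h₁) (mt add_eq_zero_iff_eq_neg.mp h₂))
      (pow_ne_zero _ hx)

theorem one_sub_natCast_div_sq_ne_zero {w : ℂ} (hw : ∀ z : ℤ, w ≠ z) (k : ℕ) :
    1 - ((k : ℂ) / w) ^ 2 ≠ 0 :=
  one_sub_div_sq_ne_zero (by exact_mod_cast hw k) (by exact_mod_cast hw (-k))

/-- Both sides equal `(x - k)(x + k)(x - k - 2)(x + k + 2) / x⁴`. -/
theorem one_sub_div_sq_shift_identity {K : Type*} [Field K] {x : K} (hx : x ≠ 0) (hx₁ : x ≠ 1)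
    (hx₂ : x ≠ -1) (k : K) :
    (1 - ((k + 1) / (x - 1)) ^ 2) * (1 - ((k + 1) / (x + 1)) ^ 2) * (1 - (1 / x) ^ 2) ^ 2 =
      (1 - (k / x) ^ 2) * (1 - ((k + 2) / x) ^ 2) := by
  have : x - 1 ≠ 0 := sub_ne_zero.mpr hx₁
  have : x + 1 ≠ 0 := mt add_eq_zero_iff_eq_neg.mp hx₂
  field_simp
  ring

theorem stmt_10_general (n : ℕ) (θ : ℤ) (v : ℕ → ℤ)
    (i : ℕ) (hi1 : 1 ≤ i) (hi2 : i ≤ n - 1)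
    (u : ℂ) (hu : ∀ k : ℤ, 2 * u ≠ (k : ℂ)) :
    (1 - 1 / (4 * u ^ 2)) ^ (θ - v i) * frakP n θ v (n - i - 1) u * frakP n θ v (n - i + 1) u /
      (frakP n θ v (n - i) (u - 1 / 2) * frakP n θ v (n - i) (u + 1 / 2)) = 1 := by
  obtain ⟨k, hk⟩ : ∃ k, n - i = k + 1 := ⟨n - i - 1, by omega⟩
  let B (w : ℂ) (j : ℕ) : ℂ := 1 - ((j : ℂ) / (2 * w)) ^ 2
  let e (l : ℕ) : ℤ := qcoef n θ v (n - l)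
  have hP (m : ℕ) (w : ℂ) : frakP n θ v m w = zpowConv (B w) e m := rfl
  have hu_sub (z : ℤ) : 2 * (u - 1 / 2) ≠ z := fun h =>
    hu (z + 1) (by push_cast; linear_combination h)
  have hu_add (z : ℤ) : 2 * (u + 1 / 2) ≠ z := fun h =>
    hu (z - 1) (by push_cast; linear_combination h)
  have hB1 : B u 1 ≠ 0 := one_sub_natCast_div_sq_ne_zero hu 1
  have hshift (j : ℕ) :
      B (u - 1 / 2) (j + 1) * B (u + 1 / 2) (j + 1) * B u 1 ^ 2 = B u j * B u (j + 2) := by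
    have := one_sub_div_sq_shift_identity (x := 2 * u) (by exact_mod_cast hu 0)
      (by exact_mod_cast hu 1) (by exact_mod_cast hu (-1)) (j : ℂ)
    simp only [B]
    push_cast
    rwa [show 2 * (u - 1 / 2) = 2 * u - 1 by ring, show 2 * (u + 1 / 2) = 2 * u + 1 by ring]
  have key := zpowConv_mul_zpowConv_add_two (B u) e _ _ (by simp [B]) hB1 hshift k
  rw [qcoef_add_two_mul_sum n θ v (by omega), show n - (k + 1) = i by omega] at key
  have hD : zpowConv (B (u - 1 / 2)) e (k + 1) * zpowConv (B (u + 1 / 2)) e (k + 1) ≠ 0 :=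
    mul_ne_zero (zpowConv_ne_zero _ e (one_sub_natCast_div_sq_ne_zero hu_sub) _)
      (zpowConv_ne_zero _ e (one_sub_natCast_div_sq_ne_zero hu_add) _)
  rw [show 1 - 1 / (4 * u ^ 2) = B u 1 by simp only [B]; push_cast; ring,
    show n - i - 1 = k by omega, show n - i + 1 = k + 2 by omega, hk, hP, hP, hP, hP,
    mul_assoc, key, div_eq_one_iff_eq hD, mul_left_comm, ← zpow_add₀ hB1]
  simp

/-- The telescoping identity in the proof of Lemma 5.6:
`(1 - 1/(4u²))^{θ - v i} · 𝔓_{n-i-1}(u) 𝔓_{n-i+1}(u) / (𝔓_{n-i}(u-½) 𝔓_{n-i}(u+½)) = 1`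
whenever `2u ∉ ℤ`. -/
theorem stmt_10 (n : ℕ) (hn : 2 ≤ n) (θ : ℤ) (v : ℕ → ℤ)
    (i : ℕ) (hi1 : 1 ≤ i) (hi2 : i ≤ n - 1)
    (u : ℂ) (hu : ∀ k : ℤ, 2 * u ≠ (k : ℂ)) :
    (1 - 1 / (4 * u ^ 2)) ^ (θ - v i) * frakP n θ v (n - i - 1) u * frakP n θ v (n - i + 1) u /
      (frakP n θ v (n - i) (u - 1 / 2) * frakP n θ v (n - i) (u + 1 / 2)) = 1 :=
  stmt_10_general n θ v i hi1 hi2 u hu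
end
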